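/- Verification identity for the randomized attribute secret key in Game 2 of the malicious-sender case: let w, s, β, α, a, z, λ ∈ ZMod p with β and α invertible. Set B = g1^β, A = g1^a, R = g2^a · g2^z, d0 = g2^{(w+s)·β⁻¹}, d1' = g2^s · R^λ, d2 = g2^λ, and d3 = g2^{λ·α⁻¹}. Then e(g1, d1' · (d2^z)⁻¹) · e(g1^α, d3) · (e(B, d0) · e(g1⁻¹, g2^w))⁻¹ = e(A · g1, d2). -/

import Mathlib

/-!
Every factor is a power of `e g1 g2`, and the exponents add up because
`(s + (a + z)λ - λz) + αλα⁻¹ - (β(w + s)β⁻¹ - w) = aλ + λ`.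
-/

/-- Exponentiation by an element of `ZMod p` via its natural-number representative. -/
def gpow {p : ℕ} {G : Type*} [Monoid G] (x : G) (a : ZMod p) : G := x ^ a.val

section Gpow

variable {p : ℕ} {M : Type*}

theorem gpow_one [Monoid M] [Fact (1 < p)] (x : M) : gpow x (1 : ZMod p) = x := by
  rw [gpow, ZMod.val_one, pow_one]

theorem gpow_add [Monoid M] [NeZero p] {x : M} (hx : x ^ p = 1) (a b : ZMod p) :
    gpow x (a + b) = gpow x a * gpow x b := by
  rw [gpow, gpow, gpow, ZMod.val_add, pow_eq_pow_of_modEq (Nat.mod_modEq _ p) hx, pow_add]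

theorem gpow_gpow [Monoid M] {x : M} (hx : x ^ p = 1) (a b : ZMod p) :
    gpow (gpow x a) b = gpow x (a * b) := by
  rw [gpow, gpow, gpow, ZMod.val_mul, pow_eq_pow_of_modEq (Nat.mod_modEq _ p) hx, pow_mul]

theorem gpow_neg [Group M] [NeZero p] {x : M} (hx : x ^ p = 1) (a : ZMod p) :
    gpow x (-a) = (gpow x a)⁻¹ := by
  rw [eq_inv_iff_mul_eq_one, ← gpow_add hx, neg_add_cancel, gpow, ZMod.val_zero, pow_zero]

theorem mul_gpow [CommMonoid M] (x y : M) (a : ZMod p) :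
    gpow (x * y) a = gpow x a * gpow y a :=
  mul_pow x y a.val

end Gpow

theorem map_inv_left_of_map_mul_left {G H T : Type*} [Group G] [Group T] (e : G → H → T)
    (he : ∀ (x x' : G) (y : H), e (x * x') y = e x y * e x' y) (x : G) (y : H) :
    e x⁻¹ y = (e x y)⁻¹ :=
  (MonoidHom.mk' (e · y) fun x x' => he x x' y).map_inv x

theorem stmt_13_general {p : ℕ} [Fact p.Prime]
    {G1 G2 GT : Type*} [CommGroup G1] [CommGroup G2] [CommGroup GT]
    (g1 : G1) (g2 : G2) (e : G1 → G2 → GT)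
    (htor2 : ∀ y : G2, y ^ p = 1)
    (htorT : ∀ z : GT, z ^ p = 1)
    (ebil1 : ∀ (x x' : G1) (y : G2), e (x * x') y = e x y * e x' y)
    (epow : ∀ a b : ZMod p, e (gpow g1 a) (gpow g2 b) = gpow (e g1 g2) (a * b))
    (w s β α a z lam : ZMod p) (hβ : IsUnit β) (hα : IsUnit α)
    (B : G1) (hB : B = gpow g1 β)
    (A : G1) (hA : A = gpow g1 a)
    (R : G2) (hR : R = gpow g2 a * gpow g2 z)
    (d0 : G2) (hd0 : d0 = gpow g2 ((w + s) * β⁻¹))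
    (d1' : G2) (hd1' : d1' = gpow g2 s * gpow R lam)
    (d2 : G2) (hd2 : d2 = gpow g2 lam)
    (d3 : G2) (hd3 : d3 = gpow g2 (lam * α⁻¹)) :
    e g1 (d1' * (gpow d2 z)⁻¹) * e (gpow g1 α) d3 *
      (e B d0 * e g1⁻¹ (gpow g2 w))⁻¹ = e (A * g1) d2 := by
  set gT := e g1 g2
  have e_g1 (b : ZMod p) : e g1 (gpow g2 b) = gpow gT b := by
    simpa only [gpow_one, one_mul] using epow 1 b
  have e_d1 : e g1 (d1' * (gpow d2 z)⁻¹) = gpow gT (s + (a + z) * lam - lam * z) := by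
    rw [hd1', hd2, hR, ← gpow_add (htor2 g2), gpow_gpow (htor2 g2), gpow_gpow (htor2 g2),
      ← gpow_add (htor2 g2), ← gpow_neg (htor2 g2), ← gpow_add (htor2 g2), e_g1,
      sub_eq_add_neg]
  have e_d3 : e (gpow g1 α) d3 = gpow gT lam := by
    rw [hd3, epow, mul_left_comm, mul_inv_cancel₀ hα.ne_zero, mul_one]
  have e_d0 : e B d0 = gpow gT (w + s) := by
    rw [hB, hd0, epow, mul_left_comm, mul_inv_cancel₀ hβ.ne_zero, mul_one]
  have e_w : e g1⁻¹ (gpow g2 w) = gpow gT (-w) := by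
    rw [map_inv_left_of_map_mul_left e ebil1, e_g1, gpow_neg (htorT gT)]
  have e_d2 : e (A * g1) d2 = gpow gT (a * lam + lam) := by
    rw [ebil1, hA, hd2, epow, e_g1, gpow_add (htorT gT)]
  rw [e_d1, e_d3, e_d0, e_w, e_d2, ← gpow_add (htorT gT), ← gpow_add (htorT gT),
    ← gpow_neg (htorT gT), ← gpow_add (htorT gT)]
  congr 1
  ring

theorem stmt_13 {p : ℕ} [Fact p.Prime]
    {G1 G2 GT : Type*} [CommGroup G1] [CommGroup G2] [CommGroup GT]
    (g1 : G1) (g2 : G2) (e : G1 → G2 → GT)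
    (htor1 : ∀ x : G1, x ^ p = 1) (htor2 : ∀ y : G2, y ^ p = 1)
    (htorT : ∀ z : GT, z ^ p = 1)
    (ebil1 : ∀ (x x' : G1) (y : G2), e (x * x') y = e x y * e x' y)
    (ebil2 : ∀ (x : G1) (y y' : G2), e x (y * y') = e x y * e x y')
    (epow : ∀ a b : ZMod p, e (gpow g1 a) (gpow g2 b) = gpow (e g1 g2) (a * b))
    (w s β α a z lam : ZMod p) (hβ : IsUnit β) (hα : IsUnit α)
    (B : G1) (hB : B = gpow g1 β)
    (A : G1) (hA : A = gpow g1 a)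
    (R : G2) (hR : R = gpow g2 a * gpow g2 z)
    (d0 : G2) (hd0 : d0 = gpow g2 ((w + s) * β⁻¹))
    (d1' : G2) (hd1' : d1' = gpow g2 s * gpow R lam)
    (d2 : G2) (hd2 : d2 = gpow g2 lam)
    (d3 : G2) (hd3 : d3 = gpow g2 (lam * α⁻¹)) :
    e g1 (d1' * (gpow d2 z)⁻¹) * e (gpow g1 α) d3 *
      (e B d0 * e g1⁻¹ (gpow g2 w))⁻¹ = e (A * g1) d2 :=
  stmt_13_general g1 g2 e htor2 htorT ebil1 epow w s β α a z lam hβ hα B hB A hA R hR d0 hd0 d1'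
    hd1' d2 hd2 d3 hd3
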